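/- Let (P, ≼, ∧, ∨) be a locally finite lattice with least element 0̂, let f be a semimultiplicative complex-valued function on P with f(x) ≠ 0 for all x ∈ P, set g(x) = 1/f(x), and let S = {x_1, …, x_n} be a finite lower closed subset of P with distinct elements, indexed so that x_i ≼ x_j only if i ≤ j. Assume l_i = ∑_{z ≼ x_i, z ⋠ x_j for all j < i} (g_d * μ)(0̂, z) ≠ 0 for all i. Then every [S]_f-eigenvalue λ ∈ ℂ of (S)_f lies in at least one of the n disks {z ∈ ℂ : |z − l_i⁻¹ ∑_{α,β=1}^n μ(x_α, x_i) μ(x_β, x_i) / f(x_α ∨ x_β)| ≤ |l_i|⁻¹ ∑_{j≠i} |∑_{α,β=1}^n μ(x_α, x_i) μ(x_β, x_j) / f(x_α ∨ x_β)|}, i ∈ {1, …, n}. -/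

import Mathlib

/-!
Semimultiplicativity gives `f (a ⊔ b) = f a * g (a ⊓ b) * f b`, so the join matrix factors as
`[S]_f = Δ (S)_g Δ` with `Δ = diag (f (x k))`. On a lower closed set Smith's factorization
`(S)_g = Zᵀ diag (l) Z` holds, where `Z` is the zeta matrix of `S` and, because `S` is lower closed
and suitably ordered, `l i = (g_d * μ)(0̂, x i)`. The Möbius matrix `U` of `S` inverts `Z`, so an
`[S]_f`-eigenvector `v` of `(S)_f` yields `w = Z Δ v ≠ 0` with `C w = λ diag (l) w`, where
`C = Uᵀ Δ⁻¹ (S)_f Δ⁻¹ U = Uᵀ [S]_{1/f} U` has the double sums of the statement as entries.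
Gershgorin's circle theorem for `diag (l)⁻¹ C` gives the disks.
-/

open Matrix Finset

structure IsMobiusFunction {P R : Type*} [PartialOrder P] [LocallyFiniteOrder P] [Ring R]
    (mu : P → P → R) : Prop where
  apply_self : ∀ p, mu p p = 1
  apply_of_lt : ∀ p q, p < q → mu p q = -∑ r ∈ Ico p q, mu p r
  apply_of_not_le : ∀ p q, ¬ p ≤ q → mu p q = 0

/-- `(h_d * μ)(0̂, z)` in the paper's notation. -/
def mobiusTransform {P R : Type*} [PartialOrder P] [OrderBot P] [LocallyFiniteOrder P] [Ring R]
    (mu : P → P → R) (h : P → R) (z : P) : R :=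
  ∑ w ∈ Icc ⊥ z, h w * mu w z

namespace IsMobiusFunction

variable {P R : Type*} [PartialOrder P] [LocallyFiniteOrder P] [Ring R] {mu : P → P → R}

theorem sum_Icc_eq_ite [DecidableEq P] (hmu : IsMobiusFunction mu) {p q : P} (h : p ≤ q) :
    ∑ z ∈ Icc p q, mu p z = if p = q then 1 else 0 := by
  rcases h.eq_or_lt with rfl | hlt
  · simp [hmu.apply_self]
  · rw [if_neg hlt.ne, ← Ico_insert_right h, sum_insert right_notMem_Ico,
      hmu.apply_of_lt p q hlt, neg_add_cancel]

theorem sum_Icc_bot_eq_ite [OrderBot P] [DecidableEq P] (hmu : IsMobiusFunction mu) (p q : P) :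
    ∑ z ∈ Icc ⊥ q, mu p z = if p = q then 1 else 0 := by
  have hsub : ∑ z ∈ Icc p q, mu p z = ∑ z ∈ Icc ⊥ q, mu p z :=
    sum_subset (Icc_subset_Icc_left bot_le) fun z hz hzn =>
      hmu.apply_of_not_le p z fun hpz => hzn (mem_Icc.mpr ⟨hpz, (mem_Icc.mp hz).2⟩)
  rw [← hsub]
  by_cases hpq : p ≤ q
  · exact hmu.sum_Icc_eq_ite hpq
  · rw [Icc_eq_empty hpq, sum_empty, if_neg (fun h => hpq h.le)]

theorem sum_Icc_bot_mobiusTransform [OrderBot P] (hmu : IsMobiusFunction mu) (h : P → R)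
    (m : P) : ∑ z ∈ Icc ⊥ m, mobiusTransform mu h z = h m := by
  classical
  unfold mobiusTransform
  rw [sum_comm' (t' := Icc ⊥ m) (s' := fun w => Icc w m)]
  · simp_rw [← mul_sum]
    rw [sum_congr rfl fun w hw => by rw [hmu.sum_Icc_eq_ite (mem_Icc.mp hw).2]]
    simp
  · intro z w
    simp only [mem_Icc, bot_le, true_and]
    constructor
    · rintro ⟨hzm, hwz⟩
      exact ⟨⟨hwz, hzm⟩, hwz.trans hzm⟩
    · rintro ⟨⟨hwz, hzm⟩, -⟩
      exact ⟨hzm, hwz⟩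

end IsMobiusFunction

theorem sum_filter_le_eq_sum_Icc_bot {P ι M : Type*} [PartialOrder P] [OrderBot P]
    [LocallyFiniteOrder P] [DecidableRel ((· ≤ ·) : P → P → Prop)] [Fintype ι]
    [AddCommMonoid M] {x : ι → P} (hinj : Function.Injective x)
    (hS : IsLowerSet (Set.range x)) (h : P → M) {m : P} (hm : m ∈ Set.range x) :
    ∑ k ∈ univ.filter (fun k => x k ≤ m), h (x k) = ∑ z ∈ Icc ⊥ m, h z := by
  refine sum_bij (fun k _ => x k) (fun k hk => ?_) (fun a _ b _ hab => hinj hab)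
    (fun z hz => ?_) (fun _ _ => rfl)
  · exact mem_Icc.mpr ⟨bot_le, (mem_filter.mp hk).2⟩
  · obtain ⟨k, rfl⟩ := hS (mem_Icc.mp hz).2 hm
    exact ⟨k, mem_filter.mpr ⟨mem_univ k, (mem_Icc.mp hz).2⟩, rfl⟩

section SetMatrices

variable {P ι R : Type*} [Fintype ι] [DecidableEq ι]

def zetaMatrix (R : Type*) [Zero R] [One R] [Preorder P]
    [DecidableRel ((· ≤ ·) : P → P → Prop)] (x : ι → P) : Matrix ι ι R :=
  of fun i j => if x i ≤ x j then 1 else 0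

def mobiusMatrix (mu : P → P → R) (x : ι → P) : Matrix ι ι R :=
  of fun i j => mu (x i) (x j)

def meetMatrix [Lattice P] (h : P → R) (x : ι → P) : Matrix ι ι R :=
  of fun i j => h (x i ⊓ x j)

def joinMatrix [Lattice P] (h : P → R) (x : ι → P) : Matrix ι ι R :=
  of fun i j => h (x i ⊔ x j)

variable [Ring R] {mu : P → P → R} {x : ι → P}

theorem IsMobiusFunction.mobiusMatrix_mul_zetaMatrix [PartialOrder P] [OrderBot P]
    [LocallyFiniteOrder P] [DecidableRel ((· ≤ ·) : P → P → Prop)] (hmu : IsMobiusFunction mu)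
    (hinj : Function.Injective x) (hS : IsLowerSet (Set.range x)) :
    mobiusMatrix mu x * zetaMatrix R x = 1 := by
  classical
  ext i j
  simp only [mul_apply, mobiusMatrix, zetaMatrix, of_apply, mul_ite, mul_one, mul_zero,
    ← sum_filter, one_apply]
  rw [sum_filter_le_eq_sum_Icc_bot hinj hS (mu (x i)) (Set.mem_range_self j),
    hmu.sum_Icc_bot_eq_ite]
  exact if_congr hinj.eq_iff rfl rfl

theorem IsMobiusFunction.zetaMatrix_transpose_mul_diagonal_mul_zetaMatrix [Lattice P]
    [OrderBot P] [LocallyFiniteOrder P] [DecidableRel ((· ≤ ·) : P → P → Prop)]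
    (hmu : IsMobiusFunction mu) (hinj : Function.Injective x) (hS : IsLowerSet (Set.range x))
    (h : P → R) :
    (zetaMatrix R x)ᵀ * diagonal (fun k => mobiusTransform mu h (x k)) * zetaMatrix R x =
      meetMatrix h x := by
  ext α β
  have hterm : ∀ k, (if x k ≤ x α then (1 : R) else 0) * mobiusTransform mu h (x k) *
      (if x k ≤ x β then 1 else 0) =
        if x k ≤ x α ⊓ x β then mobiusTransform mu h (x k) else 0 := by
    intro k
    simp only [le_inf_iff]
    split_ifs <;> simp_all
  rw [mul_apply]
  simp only [mul_diagonal, transpose_apply, zetaMatrix, of_apply, hterm, ← sum_filter]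
  rw [sum_filter_le_eq_sum_Icc_bot hinj hS _ (hS inf_le_left (Set.mem_range_self α)),
    hmu.sum_Icc_bot_mobiusTransform]
  rfl

end SetMatrices

theorem joinMatrix_eq_diagonal_mul_meetMatrix_inv_mul_diagonal {P ι K : Type*} [Lattice P]
    [Fintype ι] [DecidableEq ι] [Field K] {f : P → K} (hf : ∀ p, f p ≠ 0)
    (hsemi : ∀ p q : P, f (p ⊓ q) * f (p ⊔ q) = f p * f q) (x : ι → P) :
    joinMatrix f x =
      diagonal (fun k => f (x k)) * meetMatrix (fun p => (f p)⁻¹) x *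
        diagonal (fun k => f (x k)) := by
  ext i j
  have hmeet := hf (x i ⊓ x j)
  simp only [mul_diagonal, diagonal_mul, joinMatrix, meetMatrix, of_apply]
  field_simp
  linear_combination hsemi (x i) (x j)

theorem joinMatrix_inv_eq_diagonal_inv_mul_meetMatrix_mul_diagonal_inv {P ι K : Type*}
    [Lattice P] [Fintype ι] [DecidableEq ι] [Field K] {f : P → K} (hf : ∀ p, f p ≠ 0)
    (hsemi : ∀ p q : P, f (p ⊓ q) * f (p ⊔ q) = f p * f q) (x : ι → P) :
    joinMatrix (fun p => (f p)⁻¹) x =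
      diagonal (fun k => (f (x k))⁻¹) * meetMatrix f x * diagonal (fun k => (f (x k))⁻¹) := by
  simpa only [inv_inv] using joinMatrix_eq_diagonal_mul_meetMatrix_inv_mul_diagonal
    (f := fun p => (f p)⁻¹) (fun p => inv_ne_zero (hf p))
    (fun p q => by rw [← mul_inv, hsemi, mul_inv]) x

theorem Matrix.transpose_mul_mul_apply {ι R : Type*} [Fintype ι] [CommSemiring R]
    (U M : Matrix ι ι R) (i j : ι) :
    (Uᵀ * M * U) i j = ∑ α, ∑ β, U α i * U β j * M α β := by
  simp only [mul_apply, transpose_apply, sum_mul]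
  rw [sum_comm]
  refine sum_congr rfl fun α _ => sum_congr rfl fun β _ => ?_
  ring

theorem Matrix.exists_ne_zero_mulVec_eq_smul_mulVec_of_factorization {ι R : Type*} [Fintype ι]
    [DecidableEq ι] [CommRing R] {A B Z U D E L : Matrix ι ι R} {v : ι → R} {lam : R}
    (hUZ : U * Z = 1) (hED : E * D = 1) (hB : B = D * Zᵀ * L * Z * D) (hv : v ≠ 0)
    (heig : A *ᵥ v = lam • B *ᵥ v) :
    ∃ w ≠ 0, (Uᵀ * (E * A * E) * U) *ᵥ w = lam • L *ᵥ w := by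
  have hUZt : Uᵀ * Zᵀ = 1 := by rw [← transpose_mul, mul_eq_one_comm.mp hUZ, transpose_one]
  have hv_eq : (E * U) *ᵥ ((Z * D) *ᵥ v) = v := by
    rw [mulVec_mulVec, mul_assoc, ← mul_assoc U, hUZ, one_mul, hED, one_mulVec]
  have hA : Uᵀ * (E * A * E) * U * (Z * D) = Uᵀ * E * A := by
    rw [mul_assoc _ U, ← mul_assoc U, hUZ, one_mul, mul_assoc Uᵀ, mul_assoc (E * A), hED,
      mul_one, ← mul_assoc]
  have hB' : Uᵀ * E * B = L * (Z * D) := by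
    simp only [hB, ← mul_assoc]
    rw [mul_assoc Uᵀ E D, hED, mul_one, hUZt, one_mul]
  refine ⟨(Z * D) *ᵥ v, fun h0 => hv (by rw [← hv_eq, h0, mulVec_zero]), ?_⟩
  calc (Uᵀ * (E * A * E) * U) *ᵥ ((Z * D) *ᵥ v)
      = (Uᵀ * E) *ᵥ (A *ᵥ v) := by rw [mulVec_mulVec, mulVec_mulVec, hA]
    _ = lam • L *ᵥ ((Z * D) *ᵥ v) := by
        rw [heig, mulVec_smul, mulVec_mulVec, hB', ← mulVec_mulVec]

theorem Matrix.exists_norm_sub_le_of_mulVec_eq_smul_diagonal_mulVec {ι K : Type*} [Fintype ι]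
    [DecidableEq ι] [NormedField K] {C : Matrix ι ι K} {l w : ι → K} {lam : K}
    (hl : ∀ i, l i ≠ 0) (hw : w ≠ 0) (h : C *ᵥ w = lam • diagonal l *ᵥ w) :
    ∃ i, ‖lam - (l i)⁻¹ * C i i‖ ≤ ‖l i‖⁻¹ * ∑ j ∈ univ.erase i, ‖C i j‖ := by
  have heigvec : Module.End.HasEigenvector (toLin' (diagonal l⁻¹ * C)) lam w := by
    refine ⟨Module.End.mem_eigenspace_iff.mpr ?_, hw⟩
    rw [toLin'_apply, ← mulVec_mulVec, h, mulVec_smul, mulVec_mulVec, diagonal_mul_diagonal]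
    simp [hl]
  obtain ⟨i, hi⟩ := eigenvalue_mem_ball (Module.End.hasEigenvalue_of_hasEigenvector heigvec)
  refine ⟨i, ?_⟩
  rw [Metric.mem_closedBall, dist_eq_norm] at hi
  simpa only [diagonal_mul, Pi.inv_apply, norm_mul, norm_inv, ← mul_sum] using hi

theorem filter_Icc_bot_forall_lt_not_le_eq_singleton {P ι : Type*} [PartialOrder P] [OrderBot P]
    [LocallyFiniteOrder P] [PartialOrder ι] {x : ι → P} (hord : ∀ i j, x i ≤ x j → i ≤ j)
    (hS : IsLowerSet (Set.range x)) (i : ι) [DecidablePred fun z => ∀ j, j < i → ¬ z ≤ x j] :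
    (Icc ⊥ (x i)).filter (fun z => ∀ j, j < i → ¬ z ≤ x j) = {x i} := by
  ext z
  simp only [mem_filter, mem_Icc, bot_le, true_and, mem_singleton]
  constructor
  · rintro ⟨hz, hmin⟩
    obtain ⟨k, rfl⟩ := hS hz (Set.mem_range_self i)
    rcases (hord k i hz).lt_or_eq with hki | rfl
    · exact absurd le_rfl (hmin k hki)
    · rfl
  · rintro rfl
    exact ⟨le_rfl, fun j hji hij => (hord i j hij).not_gt hji⟩

/-- **Gerschgorin disks.** For lower closed `S`, every `[S]_f`-eigenvalue
`λ` of `(S)_f` lies in one of the `n` disks centred at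
`l i⁻¹ ∑_{α,β} μ(x α, x i) μ(x β, x i) / f (x α ∨ x β)` with radius
`|l i|⁻¹ ∑_{j ≠ i} |∑_{α,β} μ(x α, x i) μ(x β, x j) / f (x α ∨ x β)|`. -/
theorem gerschgorin_disks_meet_wrt_join
    {P : Type*} [Lattice P] [OrderBot P] [LocallyFiniteOrder P]
    [DecidableRel ((· ≤ ·) : P → P → Prop)]
    (mu : P → P → ℂ)
    (hmu_self : ∀ p, mu p p = 1)
    (hmu_lt : ∀ p q : P, p < q → mu p q = -∑ r ∈ Finset.Ico p q, mu p r)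
    (hmu_nle : ∀ p q : P, ¬ p ≤ q → mu p q = 0)
    (f : P → ℂ) (hf : ∀ p, f p ≠ 0)
    (hsemi : ∀ p q : P, f (p ⊓ q) * f (p ⊔ q) = f p * f q)
    (g : P → ℂ) (hg : ∀ p, g p = (f p)⁻¹)
    {n : ℕ} (x : Fin n → P) (hinj : Function.Injective x)
    (hord : ∀ i j, x i ≤ x j → i ≤ j)
    (hlower : ∀ i (z : P), z ≤ x i → ∃ k, x k = z)
    (l : Fin n → ℂ)
    (hl : ∀ i, l i = ∑ z ∈ (Finset.Icc ⊥ (x i)).filter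
        (fun z => ∀ j, j < i → ¬ z ≤ x j),
      ∑ w ∈ Finset.Icc ⊥ z, g w * mu w z)
    (hl0 : ∀ i, l i ≠ 0)
    (lam : ℂ) (v : Fin n → ℂ) (hv : v ≠ 0)
    (heig : (Matrix.of fun i j => f (x i ⊓ x j)).mulVec v =
      lam • (Matrix.of fun i j => f (x i ⊔ x j)).mulVec v) :
    ∃ i : Fin n,
      ‖lam - (l i)⁻¹ * ∑ α : Fin n, ∑ β : Fin n,
          mu (x α) (x i) * mu (x β) (x i) / f (x α ⊔ x β)‖ ≤
        ‖l i‖⁻¹ * ∑ j ∈ Finset.univ.erase i,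
          ‖∑ α : Fin n, ∑ β : Fin n,
            mu (x α) (x i) * mu (x β) (x j) / f (x α ⊔ x β)‖ := by
  have hmu : IsMobiusFunction mu := ⟨hmu_self, hmu_lt, hmu_nle⟩
  have hS : IsLowerSet (Set.range x) := by
    rintro _ z hz ⟨i, rfl⟩
    exact hlower i z hz
  have hl_eq : l = fun i => mobiusTransform mu g (x i) := funext fun i => by
    rw [hl, filter_Icc_bot_forall_lt_not_le_eq_singleton hord hS, sum_singleton, mobiusTransform]
  have hg_eq : g = fun p => (f p)⁻¹ := funext hg
  have hjoin : joinMatrix f x = diagonal (fun k => f (x k)) * (zetaMatrix ℂ x)ᵀ * diagonal l *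
      zetaMatrix ℂ x * diagonal (fun k => f (x k)) := by
    rw [joinMatrix_eq_diagonal_mul_meetMatrix_inv_mul_diagonal hf hsemi, hl_eq, hg_eq,
      ← hmu.zetaMatrix_transpose_mul_diagonal_mul_zetaMatrix hinj hS]
    simp only [mul_assoc]
  have hinv : diagonal (fun k => (f (x k))⁻¹) * diagonal (fun k => f (x k)) = 1 := by
    rw [diagonal_mul_diagonal, ← diagonal_one]
    exact congrArg diagonal (funext fun k => inv_mul_cancel₀ (hf (x k)))
  obtain ⟨w, hw, hCw⟩ := exists_ne_zero_mulVec_eq_smul_mulVec_of_factorization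
    (A := meetMatrix f x) (hmu.mobiusMatrix_mul_zetaMatrix hinj hS) hinv hjoin hv heig
  rw [← joinMatrix_inv_eq_diagonal_inv_mul_meetMatrix_mul_diagonal_inv hf hsemi] at hCw
  obtain ⟨i, hi⟩ := exists_norm_sub_le_of_mulVec_eq_smul_diagonal_mulVec hl0 hw hCw
  refine ⟨i, ?_⟩
  simpa only [transpose_mul_mul_apply, mobiusMatrix, joinMatrix, of_apply, div_eq_mul_inv]
    using hi
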